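/- Let v(z) = (exp(-2i(z+C)) - 1)/(exp(-2i(z+C)) + 1) with Im(C) > 0 and V(t,x) = v(x+it), U(t,x) = i V(t,x). Then at every point (t,x) with t > 0 and V(t,x) ≠ 0, the momentum equation holds: ∂U/∂t + ∂(1/V)/∂x = ∂/∂x ( (∂U/∂x)/V ). -/

import Mathlib

open Complex

noncomputable def v (C : ℂ) (z : ℂ) : ℂ :=
  (Complex.exp (-2 * I * (z + C)) - 1) / (Complex.exp (-2 * I * (z + C)) + 1)

/-!
Writing `E = exp (-2i(z + C))`, the function `v = (E - 1)/(E + 1) = -i tan (z + C)` solves the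
Riccati equation `v' = i (v² - 1)`; `E ≠ -1` on the half-plane `Im (z + C) > 0` because `|E| > 1` there.
For `V = v (x + it)` and `U = iV`, the Cauchy–Riemann relation gives `∂ₜU = -∂ₓV`, and the Riccati
equation gives `∂ₓU / V = (1 - V²) / V = 1/V - V`. The momentum equation then reads
`-∂ₓV + ∂ₓ(1/V) = ∂ₓ(1/V) - ∂ₓV`.
-/

lemma exp_neg_two_I_mul_add_one_ne_zero {w : ℂ} (hw : 0 < w.im) : exp (-2 * I * w) + 1 ≠ 0 := by
  intro h
  have hnorm : ‖exp (-2 * I * w)‖ = 1 := by rw [eq_neg_of_add_eq_zero_left h, norm_neg, norm_one]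
  rw [norm_exp] at hnorm
  have hre : (-2 * I * w).re = 2 * w.im := by simp
  rw [hre, Real.exp_eq_one_iff] at hnorm
  linarith

lemma hasDerivAt_v (C z : ℂ) (hz : exp (-2 * I * (z + C)) + 1 ≠ 0) :
    HasDerivAt (v C) (I * (v C z ^ 2 - 1)) z := by
  have hE : HasDerivAt (fun w => exp (-2 * I * (w + C))) (exp (-2 * I * (z + C)) * (-2 * I)) z := by
    simpa using (((hasDerivAt_id z).add_const C).const_mul (-2 * I)).cexp
  refine ((hE.sub_const 1).div (hE.add_const 1) hz).congr_deriv ?_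
  rw [v]
  generalize exp (-2 * I * (z + C)) = E at hz ⊢
  field_simp
  ring

lemma HasDerivAt.comp_ofReal_add_const {f : ℂ → ℂ} {f' c : ℂ} {x : ℝ}
    (hf : HasDerivAt f f' (x + c)) : HasDerivAt (fun y : ℝ => f (y + c)) f' x := by
  simpa using (hf.comp (x : ℂ) ((hasDerivAt_id _).add_const c)).comp_ofReal

lemma HasDerivAt.comp_const_add_mul_ofReal {f : ℂ → ℂ} {f' c a : ℂ} {t : ℝ}
    (hf : HasDerivAt f f' (c + a * t)) : HasDerivAt (fun s : ℝ => f (c + a * s)) (f' * a) t := by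
  simpa using (hf.comp (t : ℂ) (((hasDerivAt_id _).const_mul a).const_add c)).comp_ofReal

theorem momentum_equation_of_riccati (w : ℂ → ℂ) (t x : ℝ)
    (hw : ∀ y : ℝ, HasDerivAt w (I * (w (y + I * t) ^ 2 - 1)) (y + I * t))
    (hx : w (x + I * t) ≠ 0) :
    deriv (fun s : ℝ => I * w (x + I * s)) t + deriv (fun y : ℝ => 1 / w (y + I * t)) x
      = deriv (fun y : ℝ => deriv (fun y' : ℝ => I * w (y' + I * t)) y / w (y + I * t)) x := by
  set W : ℝ → ℂ := fun y => w (y + I * t)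
  have hW : ∀ y, HasDerivAt W (I * (W y ^ 2 - 1)) y := fun y => (hw y).comp_ofReal_add_const
  have hUt : deriv (fun s : ℝ => I * w (x + I * s)) t = -deriv W x := by
    rw [((hw x).comp_const_add_mul_ofReal.const_mul I).deriv, (hW x).deriv]
    linear_combination (W x ^ 2 - 1) * I * I_sq
  -- also valid where `W y = 0`, both sides then being `0`
  have hUx_div : (fun y => deriv (fun y' : ℝ => I * W y') y / W y) = fun y => 1 / W y - W y := by
    funext y
    have hsq : W y ^ 2 / W y = W y := by rw [sq, mul_self_div_self]
    rw [((hW y).const_mul I).deriv]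
    linear_combination (W y ^ 2 - 1) / W y * I_sq - hsq
  have hinv : DifferentiableAt ℝ (fun y => 1 / W y) x :=
    (differentiableAt_const 1).div (hW x).differentiableAt hx
  change deriv (fun s : ℝ => I * w (x + I * s)) t + deriv (fun y => 1 / W y) x
    = deriv (fun y => deriv (fun y' : ℝ => I * W y') y / W y) x
  rw [hUt, hUx_div, deriv_fun_sub hinv (hW x).differentiableAt]
  ring

theorem momentum_equation (C : ℂ) (hC : C.im > 0)
    (V : ℝ → ℝ → ℂ) (U : ℝ → ℝ → ℂ)
    (hV : ∀ t x : ℝ, V t x = v C (x + I * t))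
    (hU : ∀ t x : ℝ, U t x = I * V t x) :
    ∀ t x : ℝ, 0 < t → V t x ≠ 0 →
      deriv (fun s : ℝ => U s x) t + deriv (fun y : ℝ => 1 / V t y) x
        = deriv (fun y : ℝ => deriv (fun y' : ℝ => U t y') y / V t y) x := by
  intro t x ht hx
  simp only [hU, hV] at hx ⊢
  refine momentum_equation_of_riccati (v C) t x (fun y => hasDerivAt_v C _ ?_) hx
  exact exp_neg_two_I_mul_add_one_ne_zero (by simpa using add_pos ht hC)
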